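/- (Theorem 1) Let T be a real 3×3 matrix, regarded as a unital qubit dynamical map on Bloch vectors. Then the following are equivalent: (i) [GBLP non-Markovianity witness] there exist p ∈ [0,1] with q = 1-p and vectors r₁, r₂ ∈ ℝ³ with ‖r₁‖ ≤ 1, ‖r₂‖ ≤ 1 such that max(‖T(p r₁ - q r₂)‖, |p-q|) > max(‖p r₁ - q r₂‖, |p-q|); (ii) [BLP non-Markovianity witness] there exist vectors s₁, s₂ ∈ ℝ³ with ‖s₁‖ ≤ 1, ‖s₂‖ ≤ 1 such that ‖T(s₁ - s₂)‖ > ‖s₁ - s₂‖. -/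

import Mathlib

/-!
The Helstrom vector `p • r₁ - q • r₂` is the difference of `p • r₁` and `q • r₂`, which are
again Bloch vectors, and growth of `‖T w‖` past `‖w‖` is exactly what is needed to make the
maximum with `|p - q|` grow; so a GBLP witness yields a BLP witness. Conversely the unbiased
choice `p = q = 1/2` kills `|p - q|`, and by linearity the GBLP inequality becomes half of the
BLP one.
-/

noncomputable section

/-- The action of a (unital) qubit dynamical map, given by a real 3×3 matrix,
on Bloch vectors in ℝ³. -/
def act (T : Matrix (Fin 3) (Fin 3) ℝ) (r : EuclideanSpace ℝ (Fin 3)) :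
    EuclideanSpace ℝ (Fin 3) :=
  WithLp.toLp 2 (T.mulVec r)

lemma act_smul (T : Matrix (Fin 3) (Fin 3) ℝ) (a : ℝ) (r : EuclideanSpace ℝ (Fin 3)) :
    act T (a • r) = a • act T r := by
  simp only [act, WithLp.ofLp_smul, Matrix.mulVec_smul, WithLp.toLp_smul]

lemma norm_smul_le_one {E : Type*} [SeminormedAddCommGroup E] [NormedSpace ℝ E] {a : ℝ}
    (ha : a ∈ Set.Icc (0 : ℝ) 1) {x : E} (hx : ‖x‖ ≤ 1) : ‖a • x‖ ≤ 1 := by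
  rw [norm_smul, Real.norm_of_nonneg ha.1]
  exact mul_le_one₀ ha.2 (norm_nonneg x) hx

/-- (Theorem 1) For a unital qubit dynamical map T, the GBLP non-Markovianity witness
(the generalized trace distance increases for some bias p and some pair of Bloch
vectors) is equivalent to the BLP non-Markovianity witness (the trace distance
increases for some pair of Bloch vectors). -/
theorem gblp_iff_blp_for_unital (T : Matrix (Fin 3) (Fin 3) ℝ) :
    (∃ (p : ℝ), p ∈ Set.Icc (0 : ℝ) 1 ∧ ∃ (q : ℝ), q = 1 - p ∧
      ∃ (r₁ r₂ : EuclideanSpace ℝ (Fin 3)), ‖r₁‖ ≤ 1 ∧ ‖r₂‖ ≤ 1 ∧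
        max ‖act T (p • r₁ - q • r₂)‖ |p - q| > max ‖p • r₁ - q • r₂‖ |p - q|)
    ↔ (∃ (s₁ s₂ : EuclideanSpace ℝ (Fin 3)), ‖s₁‖ ≤ 1 ∧ ‖s₂‖ ≤ 1 ∧
        ‖act T (s₁ - s₂)‖ > ‖s₁ - s₂‖) := by
  constructor
  · rintro ⟨p, hp, q, rfl, r₁, r₂, hr₁, hr₂, hgrow⟩
    have hq : 1 - p ∈ Set.Icc (0 : ℝ) 1 := ⟨by linarith [hp.2], by linarith [hp.1]⟩
    exact ⟨p • r₁, (1 - p) • r₂, norm_smul_le_one hp hr₁, norm_smul_le_one hq hr₂,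
      lt_imp_lt_of_le_imp_le (max_le_max_right _) hgrow⟩
  · rintro ⟨s₁, s₂, hs₁, hs₂, hgrow⟩
    refine ⟨1 / 2, ⟨by norm_num, by norm_num⟩, 1 / 2, by norm_num, s₁, s₂, hs₁, hs₂, ?_⟩
    rw [← smul_sub, act_smul, sub_self, abs_zero, norm_smul, norm_smul,
      max_eq_left (by positivity), max_eq_left (by positivity)]
    exact mul_lt_mul_of_pos_left hgrow (by norm_num)
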